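/- Let G be a graph with port set P = pG, let W be a Kekulé state of G with k = W|P, and let p and q be distinct ports of G. Then there exists a subgraph C ⊆ G that is a simple path between p and q such that (C, W) is an alternating curve, if and only if the port assignment k ⊕ {p, q} is Kekulé. -/

import Mathlib

open scoped symmDiff

namespace Kekule

abbrev Node := ℕ
abbrev Graph := Finset (Finset Node)

/-- `G` is a graph: every edge is a 2-element set of nodes. -/
def IsGraph (G : Graph) : Prop := ∀ e ∈ G, e.card = 2

/-- The nodes of a graph: the elements of its edges. -/
def nodes (G : Graph) : Finset Node := G.biUnion id

/-- The number of edges of `G` containing `v`. -/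
def deg (G : Graph) (v : Node) : ℕ := (G.filter (fun e => v ∈ e)).card

/-- A port is a node contained in exactly one edge. -/
def ports (G : Graph) : Finset Node := (nodes G).filter (fun v => deg G v = 1)

/-- An internal node is a node that is not a port. -/
def internal (G : Graph) : Finset Node := (nodes G).filter (fun v => deg G v ≠ 1)

/-- A Kekulé state of `G`: a subgraph `W ⊆ G` such that every internal node
of `G` lies in exactly one edge of `W`. -/
def IsKekule (G W : Graph) : Prop := W ⊆ G ∧ ∀ v ∈ internal G, deg W v = 1

/-- A curve in `G`: a subgraph `C ⊆ G` such that every node of `C` that is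
internal in `G` lies in exactly two edges of `C`. -/
def IsCurve (G C : Graph) : Prop :=
  C ⊆ G ∧ ∀ v ∈ nodes C, v ∈ internal G → deg C v = 2

/-- `(C, W)` is an alternating curve in `G`: both are subgraphs of `G`,
`C` is a curve in `G`, and `W ∩ C` is a Kekulé state of `C`. -/
def IsAlternating (G C W : Graph) : Prop :=
  W ⊆ G ∧ IsCurve G C ∧ IsKekule C (W ∩ C)

/-- `W|P`: the set of ports in `P` that lie in some edge of `W`. -/
def rest (W : Graph) (P : Finset Node) : Finset Node := P ∩ nodes W

/-- The set of Kekulé port assignments of `G`. -/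
def KP (G : Graph) : Set (Finset Node) :=
  {g | ∃ W, IsKekule G W ∧ rest W (ports G) = g}

/-- A cell `K` over `P` is a Kekulé cell if it is the set of Kekulé port
assignments of some graph with port set `P`. -/
def IsKekuleCell (P : Finset Node) (K : Set (Finset Node)) : Prop :=
  ∃ G, IsGraph G ∧ ports G = P ∧ KP G = K

/-- A channel: a 2-element subset of `P`. -/
def IsChannel (P : Finset Node) (c : Finset Node) : Prop := c ⊆ P ∧ c.card = 2

/-- A port `p` is flexible for a cell `K`. -/
def Flexible (K : Set (Finset Node)) (p : Node) : Prop :=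
  ∃ g ∈ K, ∃ g' ∈ K, p ∈ g ∧ p ∉ g'

/-- Hamming distance between two port assignments. -/
def hdist (k k' : Finset Node) : ℕ := (k ∆ k').card

/-- The Hamming diameter of `K` equals `n`. -/
def HamDiamEq (K : Set (Finset Node)) (n : ℕ) : Prop :=
  (∃ k ∈ K, ∃ k' ∈ K, hdist k k' = n) ∧ ∀ k ∈ K, ∀ k' ∈ K, hdist k k' ≤ n

/-- `G` is connected: nonempty, and any two distinct nodes are joined by a walk. -/
def Connected (G : Graph) : Prop :=
  G.Nonempty ∧ ∀ p ∈ nodes G, ∀ q ∈ nodes G, p ≠ q →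
    ∃ (n : ℕ) (f : ℕ → Node), f 0 = p ∧ f n = q ∧
      ∀ i < n, ({f i, f (i + 1)} : Finset Node) ∈ G

/-- `C` is a simple path between `p` and `q`. -/
def IsSimplePath (C : Graph) (p q : Node) : Prop :=
  Connected C ∧ ports C = {p, q} ∧
    ∀ v ∈ nodes C, v ≠ p → v ≠ q → deg C v = 2

/-- A cycle: a connected graph all of whose nodes lie in exactly two edges. -/
def IsCycle (C : Graph) : Prop :=
  Connected C ∧ ∀ v ∈ nodes C, deg C v = 2

/-- A semi-Kekulé state of `G`: every internal node of `G` lies in an odd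
number of edges of `W`. -/
def IsSemiKekule (G W : Graph) : Prop :=
  W ⊆ G ∧ ∀ v ∈ internal G, deg W v % 2 = 1

/-- The signature of `G`. -/
def sig (G : Graph) : ℕ := (internal G).card % 2

/-- `G` is omniconjugated. -/
def Omniconjugated (G : Graph) : Prop :=
  2 ≤ (ports G).card ∧ KP G = {g | g ⊆ ports G ∧ g.card % 2 = sig G}

instance : Std.Commutative (α := Finset Node) (· ∆ ·) := ⟨symmDiff_comm⟩
instance : Std.Associative (α := Finset Node) (· ∆ ·) := ⟨symmDiff_assoc⟩

/-- The `⊕`-sum of a finite family of port assignments. -/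
def xorSum (D : Finset (Finset Node)) : Finset Node := D.fold (· ∆ ·) ∅ id

/-! If `(C, W)` is an alternating simple path from `p` to `q`, flipping `W` along it gives the
Kekulé state `W ∆ C`, which differs from `W` on port edges exactly at `p` and `q`. Conversely, if
`W'` is a Kekulé state with `W'|P = k ⊕ {p, q}`, then in `D = W ∆ W'` the ports `p`, `q` have
degree one, no other port occurs, and every other node of `D` has degree two, with one edge from
each state.
Walking from `p` through `D` therefore traces a simple path to `q`, and along it the edges of `W`
and `W'` alternate. -/

lemma mem_nodes_iff_deg_pos {G : Graph} {v : Node} : v ∈ nodes G ↔ 0 < deg G v := by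
  simp [nodes, deg, Finset.card_pos, Finset.filter_nonempty_iff]

lemma deg_mono {C D : Graph} (h : C ⊆ D) (v : Node) : deg C v ≤ deg D v :=
  Finset.card_le_card (Finset.filter_subset_filter _ h)

lemma nodes_mono {C D : Graph} (h : C ⊆ D) : nodes C ⊆ nodes D :=
  Finset.biUnion_subset_biUnion_of_subset_left _ h

lemma nodes_insert (e : Finset Node) (C : Graph) : nodes (insert e C) = e ∪ nodes C := by
  simp [nodes, Finset.biUnion_insert]

lemma mem_internal_iff {G : Graph} {v : Node} : v ∈ internal G ↔ v ∈ nodes G ∧ v ∉ ports G := by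
  simp only [internal, ports, Finset.mem_filter]
  tauto

lemma card_symmDiff_add_two_mul_card_inter {α : Type*} [DecidableEq α] (s t : Finset α) :
    (s ∆ t).card + 2 * (s ∩ t).card = s.card + t.card := by
  rw [Finset.symmDiff_def, Finset.card_union_of_disjoint disjoint_sdiff_sdiff]
  have := Finset.card_sdiff_add_card_inter s t
  have := Finset.card_sdiff_add_card_inter t s
  rw [Finset.inter_comm t s] at this
  omega

lemma deg_symmDiff_add_two_mul_deg_inter (A B : Graph) (v : Node) :
    deg (A ∆ B) v + 2 * deg (A ∩ B) v = deg A v + deg B v := by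
  have : (A ∆ B).filter (v ∈ ·) = A.filter (v ∈ ·) ∆ B.filter (v ∈ ·) := by
    ext e
    simp only [Finset.mem_filter, Finset.mem_symmDiff]
    tauto
  simp only [deg, this, Finset.filter_inter_distrib]
  exact card_symmDiff_add_two_mul_card_inter _ _

lemma deg_insert {C : Graph} {e : Finset Node} (he : e ∉ C) (v : Node) :
    deg (insert e C) v = deg C v + if v ∈ e then 1 else 0 := by
  unfold deg
  rw [Finset.filter_insert]
  split_ifs with hv
  · exact Finset.card_insert_of_notMem fun h => he (Finset.mem_of_mem_filter e h)
  · rfl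

lemma deg_erase {D : Graph} {e : Finset Node} (he : e ∈ D) (v : Node) :
    deg (D.erase e) v + (if v ∈ e then 1 else 0) = deg D v := by
  conv_rhs => rw [← Finset.insert_erase he]
  rw [deg_insert (Finset.notMem_erase e D)]

lemma deg_inter_eq_of_subset {C D : Graph} (W : Graph) {v : Node} (hCD : C ⊆ D)
    (hdeg : deg D v ≤ deg C v) : deg (W ∩ C) v = deg (W ∩ D) v := by
  have : C.filter (v ∈ ·) = D.filter (v ∈ ·) :=
    Finset.eq_of_subset_of_card_le (Finset.filter_subset_filter _ hCD) hdeg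
  simp only [deg, Finset.filter_inter_distrib, this]

lemma exists_eq_pair_of_mem {e : Finset Node} {p : Node} (he : e.card = 2) (hp : p ∈ e) :
    ∃ x, x ≠ p ∧ e = {p, x} := by
  obtain ⟨x, hx⟩ := Finset.card_eq_one.1 (by rw [Finset.card_erase_of_mem hp, he] :
    (e.erase p).card = 1)
  refine ⟨x, fun hxp => ?_, ?_⟩
  · simpa [hxp] using (hx ▸ Finset.mem_singleton_self x : x ∈ e.erase p)
  · rw [← Finset.insert_erase hp, hx]

def Adj (C : Graph) (x y : Node) : Prop := ({x, y} : Finset Node) ∈ C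

instance (C : Graph) : Std.Symm (Adj C) where
  symm _ _ h := by rwa [Adj, Finset.pair_comm]

lemma exists_walk_iff_reflTransGen {C : Graph} {a b : Node} :
    (∃ (n : ℕ) (f : ℕ → Node), f 0 = a ∧ f n = b ∧
      ∀ i < n, ({f i, f (i + 1)} : Finset Node) ∈ C) ↔ Relation.ReflTransGen (Adj C) a b := by
  constructor
  · rintro ⟨n, f, rfl, rfl, hf⟩
    induction n with
    | zero => exact .refl
    | succ n ih => exact (ih fun i hi => hf i (by omega)).tail (hf n (by omega))
  · intro h
    induction h with
    | refl => exact ⟨0, fun _ => a, rfl, rfl, by simp⟩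
    | @tail b c _ hbc ih =>
      obtain ⟨n, f, hf0, hfn, hf⟩ := ih
      refine ⟨n + 1, fun i => if i ≤ n then f i else c, by simpa using hf0, by simp, ?_⟩
      intro i hi
      rcases Nat.lt_or_eq_of_le (Nat.le_of_lt_succ hi) with hin | rfl
      · simpa [hin.le, Nat.succ_le_of_lt hin] using hf i hin
      · simp only [le_refl, if_true, Nat.not_succ_le_self, if_false, hfn]
        exact hbc

lemma connected_iff {C : Graph} : Connected C ↔ C.Nonempty ∧
    ∀ p ∈ nodes C, ∀ q ∈ nodes C, p ≠ q → Relation.ReflTransGen (Adj C) p q := by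
  simp only [Connected, exists_walk_iff_reflTransGen]

lemma connected_of_reflTransGen {C : Graph} (hC : C.Nonempty) (x : Node)
    (hx : ∀ v ∈ nodes C, Relation.ReflTransGen (Adj C) x v) : Connected C :=
  connected_iff.2 ⟨hC, fun u hu v hv _ =>
    (Std.Symm.symm _ _ (hx u hu)).trans (hx v hv)⟩

lemma isSimplePath_iff {C : Graph} {p q : Node} (hpq : p ≠ q) :
    IsSimplePath C p q ↔ Connected C ∧ deg C p = 1 ∧ deg C q = 1 ∧
      ∀ v ∈ nodes C, v ≠ p → v ≠ q → deg C v = 2 := by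
  refine ⟨fun ⟨hconn, hports, hdeg⟩ => ?_, fun ⟨hconn, hp, hq, hdeg⟩ => ⟨hconn, ?_, hdeg⟩⟩
  · have hend : ∀ v ∈ ({p, q} : Finset Node), deg C v = 1 := fun v hv =>
      (Finset.mem_filter.1 (hports.symm ▸ hv : v ∈ ports C)).2
    exact ⟨hconn, hend p (by simp), hend q (by simp), hdeg⟩
  · ext v
    simp only [ports, Finset.mem_filter, Finset.mem_insert, Finset.mem_singleton]
    constructor
    · rintro ⟨hv, hdv⟩
      by_contra! hvpq
      rw [hdeg v hv hvpq.1 hvpq.2] at hdv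
      omega
    · rintro (rfl | rfl)
      · exact ⟨mem_nodes_iff_deg_pos.2 (by omega), hp⟩
      · exact ⟨mem_nodes_iff_deg_pos.2 (by omega), hq⟩

lemma isSimplePath_pair {p q : Node} (hpq : p ≠ q) : IsSimplePath {{p, q}} p q := by
  have hnodes : nodes {{p, q}} = {p, q} := by simp [nodes]
  have hdeg : ∀ v ∈ ({p, q} : Finset Node), deg {{p, q}} v = 1 := fun v hv => by
    simp [deg, Finset.filter_singleton, hv]
  refine (isSimplePath_iff hpq).2 ⟨?_, hdeg p (by simp), hdeg q (by simp), ?_⟩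
  · refine connected_of_reflTransGen (Finset.singleton_nonempty _) p fun v hv => ?_
    rcases Finset.mem_insert.1 (hnodes ▸ hv) with rfl | hv
    · exact .refl
    · exact .single (by rw [Finset.mem_singleton.1 hv]; exact Finset.mem_singleton_self _)
  · intro v hv hvp hvq
    simp [hnodes, hvp, hvq] at hv

lemma IsSimplePath.insert_edge {C : Graph} {p x q : Node} (hC : IsSimplePath C x q)
    (hp : p ∉ nodes C) (hxq : x ≠ q) : IsSimplePath (insert {p, x} C) p q := by
  obtain ⟨hconn, hx, hq, hdeg⟩ := (isSimplePath_iff hxq).1 hC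
  have hxC : x ∈ nodes C := mem_nodes_iff_deg_pos.2 (by omega)
  have hqC : q ∈ nodes C := mem_nodes_iff_deg_pos.2 (by omega)
  have hpx : p ≠ x := by rintro rfl; exact hp hxC
  have hpq : p ≠ q := by rintro rfl; exact hp hqC
  have hpC : deg C p = 0 := by
    by_contra h
    exact hp (mem_nodes_iff_deg_pos.2 (by omega))
  have he : ({p, x} : Finset Node) ∉ C := fun he =>
    hp (Finset.mem_biUnion.2 ⟨_, he, Finset.mem_insert_self p _⟩)
  have hdeg' := deg_insert he
  refine (isSimplePath_iff hpq).2 ⟨?_, ?_, ?_, ?_⟩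
  · refine connected_of_reflTransGen (Finset.insert_nonempty _ _) x fun v hv => ?_
    have hxp : Adj (insert {p, x} C) x p := by simp [Adj, Finset.pair_comm]
    rw [nodes_insert] at hv
    rcases Finset.mem_union.1 hv with hv | hv
    · rcases Finset.mem_insert.1 hv with rfl | hv
      · exact .single hxp
      · rw [Finset.mem_singleton.1 hv]
    · obtain rfl | hvx := eq_or_ne x v
      · exact .refl
      · exact Relation.ReflTransGen.mono (fun _ _ hab => Finset.mem_insert_of_mem hab) _ _
          ((connected_iff.1 hconn).2 x hxC v hv hvx)
  · simp [hdeg', hpC]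
  · simp [hdeg', hq, hpq.symm, hxq.symm]
  · intro v hv hvp hvq
    rw [hdeg']
    obtain rfl | hvx := eq_or_ne v x
    · simp [hx]
    · have hvC : v ∈ nodes C := by
        rw [nodes_insert] at hv
        simpa [hvp, hvx] using hv
      simp [hdeg v hvC hvx hvq, hvp, hvx]

lemma exists_isSimplePath_subset {D : Graph} (hD : IsGraph D) {p q : Node} (hpq : p ≠ q)
    (hp : deg D p = 1) (hq : deg D q = 1)
    (hdeg : ∀ v ∈ nodes D, v ≠ p → v ≠ q → deg D v = 2) : ∃ C ⊆ D, IsSimplePath C p q := by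
  induction D using Finset.strongInduction generalizing p with
  | H D ih =>
  obtain ⟨e, he⟩ := Finset.card_eq_one.1 hp
  obtain ⟨heD, hpe⟩ : e ∈ D ∧ p ∈ e := Finset.mem_filter.1 (he ▸ Finset.mem_singleton_self e)
  obtain ⟨x, hxp, rfl⟩ := exists_eq_pair_of_mem (hD e heD) hpe
  obtain rfl | hxq := eq_or_ne x q
  · exact ⟨_, Finset.singleton_subset_iff.2 heD, isSimplePath_pair hpq⟩
  set D' := D.erase {p, x}
  have hxD : x ∈ nodes D := Finset.mem_biUnion.2 ⟨_, heD, by simp⟩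
  have hdeg' := deg_erase heD
  have hp' : deg D' p = 0 := by simpa [hp] using hdeg' p
  have hx' : deg D' x = 1 := by simpa [hdeg x hxD hxp hxq] using hdeg' x
  have hq' : deg D' q = 1 := by simpa [hq, hpq.symm, hxq.symm] using hdeg' q
  have hdeg'' : ∀ v ∈ nodes D', v ≠ x → v ≠ q → deg D' v = 2 := by
    intro v hv hvx hvq
    have hvp : v ≠ p := by rintro rfl; simp [mem_nodes_iff_deg_pos, hp'] at hv
    simpa [hvp, hvx, hdeg v (nodes_mono (Finset.erase_subset _ _) hv) hvp hvq] using hdeg' v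
  obtain ⟨C, hCD', hC⟩ := ih D' (Finset.erase_ssubset heD)
    (fun f hf => hD f (Finset.mem_of_mem_erase hf)) hxq hx' hq' hdeg''
  have hpC : p ∉ nodes C := by
    rw [mem_nodes_iff_deg_pos, not_lt, ← hp']
    exact deg_mono hCD' p
  exact ⟨insert {p, x} C, Finset.insert_subset heD (hCD'.trans (Finset.erase_subset _ _)),
    hC.insert_edge hpC hxq⟩

lemma exists_mem_nodes_iff_of_mem_ports {G : Graph} {r : Node} (hr : r ∈ ports G) :
    ∃ e, ∀ H ⊆ G, r ∈ nodes H ↔ e ∈ H := by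
  obtain ⟨e, he⟩ := Finset.card_eq_one.1 (Finset.mem_filter.1 hr).2
  have hstar : ∀ f ∈ G, r ∈ f ↔ f = e := fun f hf => by
    rw [← Finset.mem_singleton, ← he, Finset.mem_filter]
    simp [hf]
  refine ⟨e, fun H hH => ⟨fun h => ?_, fun h => ?_⟩⟩
  · obtain ⟨f, hf, hrf⟩ := Finset.mem_biUnion.1 h
    rwa [← (hstar f (hH hf)).1 hrf]
  · exact Finset.mem_biUnion.2 ⟨e, h, (hstar e (hH h)).2 rfl⟩

lemma rest_symmDiff {G A B : Graph} (hA : A ⊆ G) (hB : B ⊆ G) :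
    rest (A ∆ B) (ports G) = rest A (ports G) ∆ rest B (ports G) := by
  ext r
  by_cases hr : r ∈ ports G
  · obtain ⟨e, he⟩ := exists_mem_nodes_iff_of_mem_ports hr
    simp only [rest, Finset.mem_inter, Finset.mem_symmDiff, hr, true_and, he _ hA, he _ hB,
      he _ (Finset.symmDiff_subset_union.trans (Finset.union_subset hA hB))]
  · simp [rest, Finset.mem_symmDiff, hr]

lemma ports_inter_nodes_subset_ports {G C : Graph} (hC : C ⊆ G) :
    ports G ∩ nodes C ⊆ ports C := by
  intro r hr
  obtain ⟨hrG, hrC⟩ := Finset.mem_inter.1 hr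
  have := deg_mono hC r
  have := (Finset.mem_filter.1 hrG).2
  have := mem_nodes_iff_deg_pos.1 hrC
  exact Finset.mem_filter.2 ⟨hrC, by omega⟩

lemma rest_eq_of_isSimplePath {G C : Graph} (hC : C ⊆ G) {p q : Node} (hpath : IsSimplePath C p q)
    (hp : p ∈ ports G) (hq : q ∈ ports G) : rest C (ports G) = {p, q} := by
  refine ((ports_inter_nodes_subset_ports hC).trans_eq hpath.2.1).antisymm fun r hr =>
    Finset.mem_inter.2 ⟨?_, Finset.filter_subset _ _ (hpath.2.1 ▸ hr)⟩
  rcases Finset.mem_insert.1 hr with rfl | hr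
  · exact hp
  · rwa [Finset.mem_singleton.1 hr]

lemma IsKekule.symmDiff_of_isAlternating {G W C : Graph} (hW : IsKekule G W)
    (hC : IsAlternating G C W) : IsKekule G (W ∆ C) := by
  obtain ⟨-, ⟨hCG, hcurve⟩, -, hWC⟩ := hC
  refine ⟨Finset.symmDiff_subset_union.trans (Finset.union_subset hW.1 hCG), fun v hv => ?_⟩
  have hsum := deg_symmDiff_add_two_mul_deg_inter W C v
  have hWv := hW.2 v hv
  by_cases hvC : v ∈ nodes C
  · have hCv := hcurve v hvC hv
    have : deg (W ∩ C) v = 1 := hWC v (Finset.mem_filter.2 ⟨hvC, by omega⟩)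
    omega
  · have hCv : deg C v = 0 := by simpa [mem_nodes_iff_deg_pos] using hvC
    have := deg_mono (Finset.inter_subset_right : W ∩ C ⊆ C) v
    omega

lemma deg_symmDiff_of_isKekule {G W W' : Graph} (hW : IsKekule G W) (hW' : IsKekule G W')
    {v : Node} (hv : v ∈ internal G) (hvD : v ∈ nodes (W ∆ W')) :
    deg (W ∆ W') v = 2 ∧ deg (W ∩ (W ∆ W')) v = 1 := by
  have hsum := deg_symmDiff_add_two_mul_deg_inter W W' v
  have hsum' := deg_symmDiff_add_two_mul_deg_inter W (W ∆ W') v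
  rw [symmDiff_symmDiff_cancel_left] at hsum'
  have := mem_nodes_iff_deg_pos.1 hvD
  have := hW.2 v hv
  have := hW'.2 v hv
  omega

lemma exists_isAlternating_path {G W W' : Graph} (hG : IsGraph G) (hW : IsKekule G W)
    (hW' : IsKekule G W') {p q : Node} (hp : p ∈ ports G) (hq : q ∈ ports G) (hpq : p ≠ q)
    (hrest : rest (W ∆ W') (ports G) = {p, q}) :
    ∃ C ⊆ G, IsSimplePath C p q ∧ IsAlternating G C W := by
  set D := W ∆ W'
  have hDG : D ⊆ G := Finset.symmDiff_subset_union.trans (Finset.union_subset hW.1 hW'.1)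
  have hinternal : ∀ v ∈ nodes D, v ≠ p → v ≠ q → v ∈ internal G := fun v hv hvp hvq =>
    mem_internal_iff.2 ⟨nodes_mono hDG hv, fun hvG => by
      have : v ∈ rest D (ports G) := Finset.mem_inter.2 ⟨hvG, hv⟩
      simp [hrest, hvp, hvq] at this⟩
  have hend : ∀ r ∈ ({p, q} : Finset Node), deg D r = 1 := fun r hr =>
    (Finset.mem_filter.1 (ports_inter_nodes_subset_ports hDG (hrest.symm ▸ hr : r ∈ rest D (ports G)))).2
  obtain ⟨C, hCD, hC⟩ := exists_isSimplePath_subset (fun e he => hG e (hDG he)) hpq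
    (hend p (by simp)) (hend q (by simp))
    fun v hv hvp hvq => (deg_symmDiff_of_isKekule hW hW' (hinternal v hv hvp hvq) hv).1
  have hCdeg := ((isSimplePath_iff hpq).1 hC).2.2.2
  refine ⟨C, hCD.trans hDG, hC, hW.1, ⟨hCD.trans hDG, fun v hv hvG => ?_⟩,
    Finset.inter_subset_right, fun v hv => ?_⟩
  · refine hCdeg v hv ?_ ?_ <;> rintro rfl <;> exact (mem_internal_iff.1 hvG).2 ‹_›
  · obtain ⟨hvC, hvports⟩ := mem_internal_iff.1 hv
    have hvp : v ≠ p := fun h => hvports (by simp [hC.2.1, h])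
    have hvq : v ≠ q := fun h => hvports (by simp [hC.2.1, h])
    have hvD := nodes_mono hCD hvC
    obtain ⟨hD, hWD⟩ := deg_symmDiff_of_isKekule hW hW' (hinternal v hvD hvp hvq) hvD
    rwa [deg_inter_eq_of_subset W hCD (by rw [hD, hCdeg v hvC hvp hvq])]

/-- There is a simple alternating path `(C, W)` between the
distinct ports `p` and `q` if and only if the port assignment `k ⊕ {p, q}`
is Kekulé. -/
theorem statement3 (G : Graph) (hG : IsGraph G)
    (W : Graph) (hW : IsKekule G W)
    (k : Finset Node) (hk : k = rest W (ports G))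
    (p q : Node) (hp : p ∈ ports G) (hq : q ∈ ports G) (hpq : p ≠ q) :
    (∃ C : Graph, C ⊆ G ∧ IsSimplePath C p q ∧ IsAlternating G C W) ↔
      (k ∆ ({p, q} : Finset Node)) ∈ KP G := by
  subst hk
  constructor
  · rintro ⟨C, hCG, hC, hCW⟩
    refine ⟨W ∆ C, hW.symmDiff_of_isAlternating hCW, ?_⟩
    rw [rest_symmDiff hW.1 hCG, rest_eq_of_isSimplePath hCG hC hp hq]
  · rintro ⟨W', hW', hrest⟩
    refine exists_isAlternating_path hG hW hW' hp hq hpq ?_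
    rw [rest_symmDiff hW.1 hW'.1, hrest, symmDiff_symmDiff_cancel_left]

end Kekule
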